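/- Let W be an m × n real matrix and c ∈ ℝᵐ (a Gemm/affine layer x ↦ W·x + c), and let γ, β, μ, v ∈ ℝᵐ and ε ∈ ℝ be batch-normalization parameters with v_j + ε > 0 for every j < m. Define the fused layer by W'_{j i} = γ_j · W_{j i} / √(v_j + ε) and c'_j = γ_j · (c_j − μ_j) / √(v_j + ε) + β_j. Then for every x ∈ ℝⁿ and every j < m, γ_j · ((W·x + c)_j − μ_j) / √(v_j + ε) + β_j = (W'·x)_j + c'_j; that is, the batch normalization followed by the affine layer equals the single affine layer (W', c'). -/
import Mathlib


/-- Batch-normalization simplification: a batch normalization following an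
affine (Gemm) layer equals the single affine layer with fused weights and
bias. -/
theorem batchnorm_after_gemm_fusion
    {m n : ℕ} (W : Matrix (Fin m) (Fin n) ℝ) (c : Fin m → ℝ)
    (γ β μ v : Fin m → ℝ) (ε : ℝ) (hv : ∀ j : Fin m, v j + ε > 0) :
    let W' : Matrix (Fin m) (Fin n) ℝ :=
      Matrix.of fun j i => γ j * W j i / Real.sqrt (v j + ε)
    let c' : Fin m → ℝ :=
      fun j => γ j * (c j - μ j) / Real.sqrt (v j + ε) + β j
    ∀ (x : Fin n → ℝ) (j : Fin m),
      γ j * ((W.mulVec x + c) j - μ j) / Real.sqrt (v j + ε) + β j =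
        W'.mulVec x j + c' j := by
  intro W' c' x j
  have hs : Real.sqrt (v j + ε) ≠ 0 := by
    exact Real.sqrt_ne_zero'.mpr (hv j)
  simp only [W', c', Matrix.mulVec, Matrix.of_apply, dotProduct, Pi.add_apply]
  have : ∑ i, γ j * W j i / Real.sqrt (v j + ε) * x i
      = γ j * (∑ i, W j i * x i) / Real.sqrt (v j + ε) := by
    rw [Finset.mul_sum, Finset.sum_div]
    exact Finset.sum_congr rfl fun i _ => by ring
  rw [this]
  field_simp
  ring
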